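/- arXiv:1503.07158 — 2 statements merged into one kernel-verified Lean document; each statement's English description precedes it below -/
import Mathlib

section
/- Let Σ and Ψ be n×n positive semidefinite real matrices such that Σ ⪰ Ψ and Ψ⁺ ⪰ Σ⁺ (where X⁺ denotes the Moore–Penrose pseudoinverse). Then rank(Ψ) = rank(Σ). -/
/-!
In the Loewner order, `A ⪰ B ⪰ 0` forces `ker A ⊆ ker B` (if `Ax = 0` then
`0 ≤ xᴴBx ≤ xᴴAx = 0`, and `xᴴBx = 0` gives `Bx = 0`), hence `rank B ≤ rank A`.
The Moore–Penrose inverse of a positive semidefinite matrix is again positive semidefinite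
and has the same rank, so `Σ ⪰ Ψ` gives `rank Ψ ≤ rank Σ` and `Ψ⁺ ⪰ Σ⁺` gives the reverse.
-/

open Matrix

def IsMoorePenroseInv {n : ℕ} (A B : Matrix (Fin n) (Fin n) ℝ) : Prop :=
  A * B * A = A ∧ B * A * B = B ∧ (A * B)ᵀ = A * B ∧ (B * A)ᵀ = B * A

section Loewner

variable {m 𝕜 : Type*} [Fintype m] [RCLike 𝕜] {A B : Matrix m m 𝕜}

open scoped ComplexOrder

theorem Matrix.ker_mulVecLin_le_of_posSemidef_sub (hB : B.PosSemidef) (h : (A - B).PosSemidef) :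
    LinearMap.ker A.mulVecLin ≤ LinearMap.ker B.mulVecLin := by
  intro x hx
  rw [LinearMap.mem_ker, mulVecLin_apply] at hx ⊢
  rw [← hB.dotProduct_mulVec_zero_iff]
  have hdiff := h.dotProduct_mulVec_nonneg x
  rw [sub_mulVec, dotProduct_sub, hx, dotProduct_zero, zero_sub, neg_nonneg] at hdiff
  exact le_antisymm hdiff (hB.dotProduct_mulVec_nonneg x)

theorem Matrix.rank_le_rank_of_posSemidef_sub (hB : B.PosSemidef) (h : (A - B).PosSemidef) :
    B.rank ≤ A.rank := by
  have hker := Submodule.finrank_mono (ker_mulVecLin_le_of_posSemidef_sub hB h)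
  have hnullityA := LinearMap.finrank_range_add_finrank_ker A.mulVecLin
  have hnullityB := LinearMap.finrank_range_add_finrank_ker B.mulVecLin
  simp only [Matrix.rank]
  omega

end Loewner

theorem Matrix.rank_eq_of_mul_mul_eq {m n R : Type*} [Fintype m] [Fintype n] [CommSemiring R]
    [StrongRankCondition R] {A : Matrix m n R} {B : Matrix n m R}
    (hA : A * B * A = A) (hB : B * A * B = B) : B.rank = A.rank := by
  apply le_antisymm
  · calc B.rank = (B * A * B).rank := by rw [hB]
      _ ≤ (B * A).rank := rank_mul_le_left _ _
      _ ≤ A.rank := rank_mul_le_right _ _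
  · calc A.rank = (A * B * A).rank := by rw [hA]
      _ ≤ (A * B).rank := rank_mul_le_left _ _
      _ ≤ B.rank := rank_mul_le_right _ _

namespace IsMoorePenroseInv

variable {n : ℕ} {A B C : Matrix (Fin n) (Fin n) ℝ}

theorem unique (hB : IsMoorePenroseInv A B) (hC : IsMoorePenroseInv A C) : B = C := by
  obtain ⟨hB1, hB2, hB3, hB4⟩ := hB
  obtain ⟨hC1, hC2, hC3, hC4⟩ := hC
  have hB_eq : B = B * A * C := by
    calc B = B * (A * B)ᵀ := by rw [hB3, ← Matrix.mul_assoc, hB2]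
      _ = B * ((A * C * A) * B)ᵀ := by rw [hC1]
      _ = B * ((A * B)ᵀ * (A * C)ᵀ) := by rw [← transpose_mul]; noncomm_ring
      _ = (B * A * B) * (A * C) := by rw [hB3, hC3]; noncomm_ring
      _ = B * A * C := by rw [hB2]; noncomm_ring
  have hC_eq : C = B * A * C := by
    calc C = (C * A)ᵀ * C := by rw [hC4, hC2]
      _ = (C * (A * B * A))ᵀ * C := by rw [hB1]
      _ = ((B * A)ᵀ * (C * A)ᵀ) * C := by rw [← transpose_mul]; noncomm_ring
      _ = (B * A) * ((C * A) * C) := by rw [hB4, hC4]; noncomm_ring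
      _ = B * A * C := by rw [hC2]
  exact hB_eq.trans hC_eq.symm

theorem transpose (h : IsMoorePenroseInv A B) : IsMoorePenroseInv Aᵀ Bᵀ := by
  obtain ⟨h1, h2, h3, h4⟩ := h
  refine ⟨?_, ?_, ?_, ?_⟩
  · rw [← transpose_mul, ← transpose_mul, ← Matrix.mul_assoc, h1]
  · rw [← transpose_mul, ← transpose_mul, ← Matrix.mul_assoc, h2]
  · rw [← transpose_mul, h4, h4]
  · rw [← transpose_mul, h3, h3]

theorem transpose_eq_self (hA : Aᵀ = A) (h : IsMoorePenroseInv A B) : Bᵀ = B :=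
  (hA ▸ h.transpose).unique h

theorem posSemidef (hA : A.PosSemidef) (h : IsMoorePenroseInv A B) : B.PosSemidef := by
  have hBt : Bᵀ = B := h.transpose_eq_self hA.isHermitian.eq
  have hB : Bᵀ * A * B = B := by rw [hBt]; exact h.2.1
  simpa [hB] using hA.conjTranspose_mul_mul_same B

theorem rank_eq (h : IsMoorePenroseInv A B) : B.rank = A.rank :=
  rank_eq_of_mul_mul_eq h.1 h.2.1

end IsMoorePenroseInv

/-- If `Σ ⪰ Ψ ⪰ 0` and `Ψ⁺ ⪰ Σ⁺`, then `rank Ψ = rank Σ`. -/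
theorem stmt_0 {n : ℕ} (Sig Psi Sigp Psip : Matrix (Fin n) (Fin n) ℝ)
    (hSig : Sig.PosSemidef) (hPsi : Psi.PosSemidef)
    (hSigp : IsMoorePenroseInv Sig Sigp) (hPsip : IsMoorePenroseInv Psi Psip)
    (hge : (Sig - Psi).PosSemidef) (hgep : (Psip - Sigp).PosSemidef) :
    Psi.rank = Sig.rank := by
  have hrank_le : Psi.rank ≤ Sig.rank := rank_le_rank_of_posSemidef_sub hPsi hge
  have hrank_ge : Sigp.rank ≤ Psip.rank :=
    rank_le_rank_of_posSemidef_sub (hSigp.posSemidef hSig) hgep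
  rw [hSigp.rank_eq, hPsip.rank_eq] at hrank_ge
  exact le_antisymm hrank_le hrank_ge
end

section
/- Let h(X) = AXAᵀ + Q for A ∈ ℝ^{n×n}, Q ⪰ 0, and let P̄ ⪰ 0 be a fixed point or any PSD matrix with h(P̄) ⪰ P̄. Then for every τ ≥ n, rank(h^τ(P̄) − P̄) = rank(h^n(P̄) − P̄). -/
/-!
Writing `Σ = h(P̄) - P̄`, the increments `h^[i+1] P̄ - h^[i] P̄ = Aⁱ Σ (Aᵀ)ⁱ` telescope, so
`h^[k] P̄ - P̄ = ∑_{i<k} Aⁱ Σ (Aᵀ)ⁱ`. As a sum of positive semidefinite matrices, its kernel is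
`{x | Σ (Aᵀ)ⁱ x = 0 for all i < k}`. By Cayley–Hamilton every power `(Aᵀ)ᵐ` is a polynomial of
degree `< n` in `Aᵀ`, so these kernels, hence the ranks, stop changing from `k = n` on.
-/

open Matrix Finset Polynomial

section AffineIterate

variable {R : Type*} [Ring R] (a b q : R)

theorem iterate_affine_sub_iterate_affine (i : ℕ) (x y : R) :
    (fun X => a * X * b + q)^[i] x - (fun X => a * X * b + q)^[i] y = a ^ i * (x - y) * b ^ i := by
  induction i with
  | zero => simp
  | succ i ih =>
    calc _ = a * ((fun X => a * X * b + q)^[i] x - (fun X => a * X * b + q)^[i] y) * b := by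
          simp only [Function.iterate_succ_apply']
          noncomm_ring
      _ = a ^ (i + 1) * (x - y) * b ^ (i + 1) := by
          rw [ih, pow_succ', pow_succ]
          noncomm_ring

theorem iterate_affine_sub_eq_sum (p : R) (k : ℕ) :
    (fun X => a * X * b + q)^[k] p - p =
      ∑ i ∈ range k, a ^ i * ((a * p * b + q) - p) * b ^ i :=
  (sum_range_sub (fun i => (fun X => a * X * b + q)^[i] p) k).symm.trans <|
    sum_congr rfl fun i _ => by
      rw [Function.iterate_succ_apply, iterate_affine_sub_iterate_affine]

end AffineIterate

namespace Matrix

variable {ι κ : Type*} [Fintype ι]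

theorem rank_eq_rank_of_ker_mulVecLin_eq {K : Type*} [Field K] {M N : Matrix κ ι K}
    (h : LinearMap.ker M.mulVecLin = LinearMap.ker N.mulVecLin) : M.rank = N.rank := by
  have hM := M.mulVecLin.finrank_range_add_finrank_ker
  have hN := N.mulVecLin.finrank_range_add_finrank_ker
  rw [h] at hM
  rw [rank, rank]
  omega

theorem map_pow_mulVec_eq_zero_of_forall_lt_card {R M : Type*} [CommRing R] [Nontrivial R]
    [AddCommGroup M] [Module R M] [DecidableEq ι] {B : Matrix ι ι R} {x : ι → R}
    (f : (ι → R) →ₗ[R] M) (hx : ∀ i < Fintype.card ι, f (B ^ i *ᵥ x) = 0) (m : ℕ) :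
    f (B ^ m *ᵥ x) = 0 := by
  rcases isEmpty_or_nonempty ι with _ | _
  · rw [Subsingleton.elim (B ^ m *ᵥ x) 0, map_zero]
  have hdeg : (X ^ m %ₘ B.charpoly).natDegree < Fintype.card ι := by
    rw [← B.charpoly_natDegree_eq_dim]
    refine natDegree_modByMonic_lt _ B.charpoly_monic fun hone => Fintype.card_ne_zero (α := ι) ?_
    rw [← B.charpoly_natDegree_eq_dim, hone, natDegree_one]
  rw [pow_eq_aeval_mod_charpoly, aeval_eq_sum_range' hdeg, sum_mulVec, map_sum]
  exact sum_eq_zero fun i hi => by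
    rw [smul_mulVec, map_smul, hx i (mem_range.mp hi), smul_zero]

open scoped ComplexOrder

variable {𝕜 : Type*} [RCLike 𝕜]

theorem PosSemidef.sum_mulVec_eq_zero_iff {P : κ → Matrix ι ι 𝕜} {s : Finset κ}
    (hP : ∀ i ∈ s, (P i).PosSemidef) (x : ι → 𝕜) :
    (∑ i ∈ s, P i) *ᵥ x = 0 ↔ ∀ i ∈ s, P i *ᵥ x = 0 := by
  rw [← (posSemidef_sum s hP).dotProduct_mulVec_zero_iff, sum_mulVec, dotProduct_sum,
    sum_eq_zero_iff_of_nonneg fun i hi => (hP i hi).dotProduct_mulVec_nonneg x]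
  exact forall₂_congr fun i hi => (hP i hi).dotProduct_mulVec_zero_iff x

theorem PosSemidef.mul_mul_conjTranspose_mulVec_eq_zero_iff [Fintype κ] {S : Matrix ι ι 𝕜}
    (hS : S.PosSemidef) (M : Matrix κ ι 𝕜) (x : κ → 𝕜) :
    (M * S * Mᴴ) *ᵥ x = 0 ↔ S *ᵥ (Mᴴ *ᵥ x) = 0 := by
  rw [← (hS.mul_mul_conjTranspose_same M).dotProduct_mulVec_zero_iff,
    ← hS.dotProduct_mulVec_zero_iff, ← mulVec_mulVec, ← mulVec_mulVec, dotProduct_mulVec,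
    star_mulVec, conjTranspose_conjTranspose]

variable [DecidableEq ι] {S : Matrix ι ι 𝕜}

theorem PosSemidef.sum_pow_mul_mul_conjTranspose_pow_mulVec_eq_zero_iff (hS : S.PosSemidef)
    (A : Matrix ι ι 𝕜) (k : ℕ) (x : ι → 𝕜) :
    (∑ i ∈ range k, A ^ i * S * Aᴴ ^ i) *ᵥ x = 0 ↔ ∀ i < k, S *ᵥ (Aᴴ ^ i *ᵥ x) = 0 := by
  simp_rw [← conjTranspose_pow]
  rw [PosSemidef.sum_mulVec_eq_zero_iff fun i _ => hS.mul_mul_conjTranspose_same (A ^ i)]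
  simp only [hS.mul_mul_conjTranspose_mulVec_eq_zero_iff, mem_range]

theorem PosSemidef.ker_sum_pow_mul_mul_conjTranspose_pow_eq (hS : S.PosSemidef)
    (A : Matrix ι ι 𝕜) {τ : ℕ} (hτ : Fintype.card ι ≤ τ) :
    LinearMap.ker (∑ i ∈ range τ, A ^ i * S * Aᴴ ^ i).mulVecLin =
      LinearMap.ker (∑ i ∈ range (Fintype.card ι), A ^ i * S * Aᴴ ^ i).mulVecLin := by
  ext x
  simp only [LinearMap.mem_ker, mulVecLin_apply,
    hS.sum_pow_mul_mul_conjTranspose_pow_mulVec_eq_zero_iff]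
  exact ⟨fun h i hi => h i (hi.trans_le hτ),
    fun h i _ => map_pow_mulVec_eq_zero_of_forall_lt_card S.mulVecLin h i⟩

theorem PosSemidef.rank_sum_pow_mul_mul_conjTranspose_pow_eq (hS : S.PosSemidef)
    (A : Matrix ι ι 𝕜) {τ : ℕ} (hτ : Fintype.card ι ≤ τ) :
    (∑ i ∈ range τ, A ^ i * S * Aᴴ ^ i).rank =
      (∑ i ∈ range (Fintype.card ι), A ^ i * S * Aᴴ ^ i).rank :=
  rank_eq_rank_of_ker_mulVecLin_eq (hS.ker_sum_pow_mul_mul_conjTranspose_pow_eq A hτ)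

end Matrix

theorem stmt_13_general {n : ℕ} (A Q Pbar : Matrix (Fin n) (Fin n) ℝ)
    (h : Matrix (Fin n) (Fin n) ℝ → Matrix (Fin n) (Fin n) ℝ)
    (hh : h = fun X => A * X * Aᵀ + Q)
    (hmono : (h Pbar - Pbar).PosSemidef)
    (τ : ℕ) (hτ : n ≤ τ) :
    (h^[τ] Pbar - Pbar).rank = (h^[n] Pbar - Pbar).rank := by
  subst hh
  rw [iterate_affine_sub_eq_sum, iterate_affine_sub_eq_sum, ← conjTranspose_eq_transpose_of_trivial]
  simpa using hmono.rank_sum_pow_mul_mul_conjTranspose_pow_eq A (by simpa using hτ)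

/-- For the Lyapunov-type map `h(X) = A X Aᵀ + Q` with `Q ⪰ 0` and `h(P̄) ⪰ P̄ ⪰ 0`:
for every `τ ≥ n`, `rank(h^τ(P̄) − P̄) = rank(h^n(P̄) − P̄)`. -/
theorem stmt_13 {n : ℕ} (A Q Pbar : Matrix (Fin n) (Fin n) ℝ)
    (hQ : Q.PosSemidef) (hP : Pbar.PosSemidef)
    (h : Matrix (Fin n) (Fin n) ℝ → Matrix (Fin n) (Fin n) ℝ)
    (hh : h = fun X => A * X * Aᵀ + Q)
    (hmono : (h Pbar - Pbar).PosSemidef)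
    (τ : ℕ) (hτ : n ≤ τ) :
    (h^[τ] Pbar - Pbar).rank = (h^[n] Pbar - Pbar).rank :=
  stmt_13_general A Q Pbar h hh hmono τ hτ
end
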